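/- arXiv:2404.00046 — 3 statements merged into one kernel-verified Lean document; each statement's English description precedes it below -/
import Mathlib

section
/- Let D be a nonnegative integer-valued integrable random variable, r > 0, h > 0, β ∈ [0,1), and define L(x) = E[(1-β)·r·min(x,D) - h·(x-D)⁺] for x ∈ ℕ. Then L(x+1) - L(x) = (1-β)·r·P[D ≥ x+1] - h·P[D ≤ x], and s* := min{x ∈ ℕ : P[D ≤ x] ≥ (1-β)r / ((1-β)r + h)} is a global maximizer of L over ℕ. -/
/-!
Raising the base-stock level from `x` to `x + 1` earns `(1-β) r` exactly when `D > x` and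
costs `h` exactly when `D ≤ x`, so `L (x+1) - L x = (1-β) r - ((1-β) r + h) P[D ≤ x]`.
These increments decrease in `x`, so `L` increases up to the first level at which
`P[D ≤ x]` reaches the critical ratio and decreases afterwards; such a level exists
because `P[D ≤ x] → 1` and the critical ratio is `< 1`.
-/

open MeasureTheory Filter Topology

def baseStockReward (a h : ℝ) (x d : ℕ) : ℝ :=
  a * min (x : ℝ) d - h * max ((x : ℝ) - d) 0

theorem abs_baseStockReward_le (a h : ℝ) (x d : ℕ) :
    |baseStockReward a h x d| ≤ (|a| + |h|) * x := by
  have hmin : |min (x : ℝ) d| ≤ x := by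
    rw [abs_of_nonneg (by positivity)]
    exact min_le_left _ _
  have hmax : |max ((x : ℝ) - d) 0| ≤ x := by
    rw [abs_of_nonneg (le_max_right _ _)]
    exact max_le (by linarith [Nat.cast_nonneg (α := ℝ) d]) (Nat.cast_nonneg x)
  calc |baseStockReward a h x d|
      ≤ |a| * |min (x : ℝ) d| + |h| * |max ((x : ℝ) - d) 0| := by
        rw [baseStockReward, ← abs_mul, ← abs_mul]; exact abs_sub _ _
    _ ≤ (|a| + |h|) * x := by
        rw [add_mul]; gcongr

theorem baseStockReward_succ_sub (a h : ℝ) (x d : ℕ) :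
    baseStockReward a h (x + 1) d - baseStockReward a h x d =
      (if x + 1 ≤ d then a else 0) - (if d ≤ x then h else 0) := by
  unfold baseStockReward
  push_cast
  rcases le_or_gt d x with hdx | hxd
  · have hdx' : (d : ℝ) ≤ x := by exact_mod_cast hdx
    rw [if_neg (by omega), if_pos hdx, min_eq_right (by linarith), min_eq_right hdx',
      max_eq_left (by linarith), max_eq_left (by linarith)]
    ring
  · have hxd' : (x : ℝ) + 1 ≤ d := by exact_mod_cast hxd
    rw [if_pos (by omega), if_neg (by omega), min_eq_left hxd', min_eq_left (by linarith),
      max_eq_right (by linarith), max_eq_right (by linarith)]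
    ring

section

variable {Ω : Type*} [MeasurableSpace Ω] {μ : Measure Ω} {D : Ω → ℕ}

theorem integrable_baseStockReward [IsFiniteMeasure μ] (hD : Measurable D) (a h : ℝ) (x : ℕ) :
    Integrable (fun ω => baseStockReward a h x (D ω)) μ :=
  .of_bound ((measurable_from_nat (f := baseStockReward a h x)).comp hD).aestronglyMeasurable _
    (.of_forall fun ω => abs_baseStockReward_le a h x (D ω))

theorem integral_baseStockReward_succ_sub [IsFiniteMeasure μ] (hD : Measurable D)
    (a h : ℝ) (x : ℕ) :
    ∫ ω, baseStockReward a h (x + 1) (D ω) ∂μ - ∫ ω, baseStockReward a h x (D ω) ∂μ =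
      a * (μ {ω | x + 1 ≤ D ω}).toReal - h * (μ {ω | D ω ≤ x}).toReal := by
  have hsucc : MeasurableSet {ω | x + 1 ≤ D ω} := hD measurableSet_Ici
  have hle : MeasurableSet {ω | D ω ≤ x} := hD measurableSet_Iic
  rw [← integral_sub (integrable_baseStockReward hD a h _) (integrable_baseStockReward hD a h _)]
  have hdiff : (fun ω => baseStockReward a h (x + 1) (D ω) - baseStockReward a h x (D ω)) =
      fun ω => {ω | x + 1 ≤ D ω}.indicator (fun _ => a) ω -
        {ω | D ω ≤ x}.indicator (fun _ => h) ω := by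
    funext ω
    simp only [baseStockReward_succ_sub, Set.indicator_apply, Set.mem_ofPred_eq]
  rw [hdiff,
    integral_sub ((integrable_const a).indicator hsucc) ((integrable_const h).indicator hle),
    integral_indicator_const _ hsucc, integral_indicator_const _ hle, smul_eq_mul, smul_eq_mul,
    mul_comm, mul_comm h, measureReal_def, measureReal_def]

theorem toReal_measure_succ_le [IsProbabilityMeasure μ] (hD : Measurable D) (x : ℕ) :
    (μ {ω | x + 1 ≤ D ω}).toReal = 1 - (μ {ω | D ω ≤ x}).toReal := by
  have hcompl : {ω | x + 1 ≤ D ω} = {ω | D ω ≤ x}ᶜ := by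
    ext ω; simp only [Set.mem_ofPred_eq, Set.mem_compl_iff, not_le, Nat.succ_le_iff]
  have hle : MeasurableSet {ω | D ω ≤ x} := hD measurableSet_Iic
  rw [hcompl, ← measureReal_def, ← measureReal_def, probReal_compl_eq_one_sub hle]

theorem tendsto_toReal_measure_le_atTop [IsProbabilityMeasure μ] :
    Tendsto (fun n : ℕ => (μ {ω | D ω ≤ n}).toReal) atTop (𝓝 1) := by
  have hmono : Monotone fun n : ℕ => {ω | D ω ≤ n} := fun m n hmn ω hω => le_trans hω hmn
  have hunion : ⋃ n : ℕ, {ω | D ω ≤ n} = Set.univ :=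
    Set.eq_univ_of_forall fun ω => Set.mem_iUnion.2 ⟨D ω, le_refl (D ω)⟩
  have := tendsto_measure_iUnion_atTop (μ := μ) hmono
  rw [hunion, measure_univ] at this
  exact (ENNReal.tendsto_toReal ENNReal.one_ne_top).comp this

end

theorem le_apply_sInf_of_sub_eq {f F : ℕ → ℝ} {a b : ℝ} (hF : Monotone F) (hb : 0 < b)
    (hf : ∀ x, f (x + 1) - f x = a - b * F x) (hne : {x | a / b ≤ F x}.Nonempty) (x : ℕ) :
    f x ≤ f (sInf {x | a / b ≤ F x}) := by
  set s := sInf {x | a / b ≤ F x}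
  have hs : a / b ≤ F s := Nat.sInf_mem hne
  rcases le_total x s with hxs | hsx
  · refine monotoneOn_of_le_succ Set.ordConnected_Iic (fun n _ _ hn => ?_) hxs (le_refl s) hxs
    rw [Set.mem_Iic, Order.succ_le_iff] at hn
    have hFn : F n < a / b := not_le.1 (Nat.notMem_of_lt_sInf hn)
    rw [lt_div_iff₀ hb] at hFn
    rw [Order.succ_eq_add_one]
    linarith [hf n]
  · refine antitoneOn_nat_Ici_of_succ_le (fun n hn => ?_) (le_refl s) hsx hsx
    have hFn : a / b ≤ F n := hs.trans (hF hn)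
    rw [div_le_iff₀ hb] at hFn
    linarith [hf n]

theorem optimal_base_stock_quantile_general {Ω : Type*} [MeasurableSpace Ω]
    (μ : Measure Ω) [IsProbabilityMeasure μ]
    (D : Ω → ℕ) (hD : Measurable D)
    (r h β : ℝ) (hr : 0 < r) (hh : 0 < h) (hβ1 : β < 1)
    (L : ℕ → ℝ)
    (hL : ∀ x : ℕ, L x =
      ∫ ω, ((1 - β) * r * min (x : ℝ) (D ω) - h * max ((x : ℝ) - D ω) 0) ∂μ) :
    (∀ x : ℕ, L (x + 1) - L x =
        (1 - β) * r * (μ {ω | x + 1 ≤ D ω}).toReal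
          - h * (μ {ω | D ω ≤ x}).toReal) ∧
      (∀ x : ℕ, L x ≤
        L (sInf {x : ℕ |
          (1 - β) * r / ((1 - β) * r + h) ≤ (μ {ω | D ω ≤ x}).toReal})) := by
  have hdiff (x : ℕ) : L (x + 1) - L x =
      (1 - β) * r * (μ {ω | x + 1 ≤ D ω}).toReal - h * (μ {ω | D ω ≤ x}).toReal := by
    rw [hL, hL]
    exact integral_baseStockReward_succ_sub hD _ h x
  have hgain : 0 < (1 - β) * r := mul_pos (by linarith) hr
  have hratio : (1 - β) * r / ((1 - β) * r + h) < 1 := (div_lt_one (by linarith)).2 (by linarith)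
  refine ⟨hdiff, le_apply_sInf_of_sub_eq ?_ (by linarith) (fun x => ?_) ?_⟩
  · exact fun m n hmn => ENNReal.toReal_mono (measure_ne_top _ _)
      (measure_mono fun ω hω => le_trans hω hmn)
  · rw [hdiff, toReal_measure_succ_le hD]
    ring
  · exact (tendsto_toReal_measure_le_atTop.eventually (eventually_ge_nhds hratio)).exists

/-- Critical-quantile characterization of the optimal base-stock level for
the zero-lead-time partial backorder system: the first difference of
`L(x) = E[(1-β) r min(x,D) - h (x-D)⁺]` equals
`(1-β) r P[D ≥ x+1] - h P[D ≤ x]`, and the smallest `x` with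
`P[D ≤ x] ≥ (1-β)r/((1-β)r + h)` is a global maximizer of `L` over `ℕ`. -/
theorem optimal_base_stock_quantile {Ω : Type*} [MeasurableSpace Ω]
    (μ : Measure Ω) [IsProbabilityMeasure μ]
    (D : Ω → ℕ) (hD : Measurable D)
    (hDint : Integrable (fun ω => (D ω : ℝ)) μ)
    (r h β : ℝ) (hr : 0 < r) (hh : 0 < h) (hβ0 : 0 ≤ β) (hβ1 : β < 1)
    (L : ℕ → ℝ)
    (hL : ∀ x : ℕ, L x =
      ∫ ω, ((1 - β) * r * min (x : ℝ) (D ω) - h * max ((x : ℝ) - D ω) 0) ∂μ) :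
    (∀ x : ℕ, L (x + 1) - L x =
        (1 - β) * r * (μ {ω | x + 1 ≤ D ω}).toReal
          - h * (μ {ω | D ω ≤ x}).toReal) ∧
      (∀ x : ℕ, L x ≤
        L (sInf {x : ℕ |
          (1 - β) * r / ((1 - β) * r + h) ≤ (μ {ω | D ω ≤ x}).toReal})) :=
  optimal_base_stock_quantile_general μ D hD r h β hr hh hβ1 L hL
end

section
/- Let δ ∈ (0,1], p ∈ [0,1), and d > 0. Set c = ((1 + p^δ)/2)^{1/δ} and κ = p·d/(c - p). Then c > p, and for every real x ≥ κ one has p^{1+δ}·(x + d)^δ - p·x^δ ≤ -(1/2)·(1 - p^δ)·p·x^δ. -/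
/-- Geometric-drift inequality for the Lyapunov function of the backorder
coordinate: with `c = ((1+p^δ)/2)^{1/δ}` and `κ = p d/(c - p)`, one has
`c > p`, and for `x ≥ κ`,
`p^{1+δ} (x+d)^δ - p x^δ ≤ -(1/2)(1 - p^δ) p x^δ`. -/
theorem lyapunov_drift_ineq (δ p d : ℝ) (hδ0 : 0 < δ) (hδ1 : δ ≤ 1)
    (hp0 : 0 ≤ p) (hp1 : p < 1) (hd : 0 < d) :
    p < ((1 + p ^ δ) / 2) ^ (1 / δ) ∧
      ∀ x : ℝ, p * d / (((1 + p ^ δ) / 2) ^ (1 / δ) - p) ≤ x →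
        p ^ (1 + δ) * (x + d) ^ δ - p * x ^ δ ≤
          -(1 / 2) * (1 - p ^ δ) * (p * x ^ δ) := by
  have hpδ1 : p ^ δ < 1 := Real.rpow_lt_one hp0 hp1 hδ0
  have hpδ0 : 0 ≤ p ^ δ := Real.rpow_nonneg hp0 δ
  have hmul : δ * (1 / δ) = 1 := by field_simp
  have hc : p < ((1 + p ^ δ) / 2) ^ (1 / δ) := by
    have h1 : p ^ δ < (1 + p ^ δ) / 2 := by linarith
    have h2 := Real.rpow_lt_rpow hpδ0 h1 (by positivity : (0:ℝ) < 1 / δ)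
    rwa [← Real.rpow_mul hp0, hmul, Real.rpow_one] at h2
  refine ⟨hc, fun x hx => ?_⟩
  set c : ℝ := ((1 + p ^ δ) / 2) ^ (1 / δ) with hcdef
  have hcp : 0 < c - p := sub_pos.2 hc
  have hc0 : 0 ≤ c := le_trans hp0 hc.le
  have hx0 : 0 ≤ x := le_trans (by positivity) hx
  have hcδ : c ^ δ = (1 + p ^ δ) / 2 := by
    rw [hcdef, ← Real.rpow_mul (by positivity), one_div, inv_mul_cancel₀ hδ0.ne',
      Real.rpow_one]
  have hkey : p * (x + d) ≤ c * x := by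
    rw [div_le_iff₀ hcp] at hx
    nlinarith
  have h2 : (p * (x + d)) ^ δ ≤ (c * x) ^ δ :=
    Real.rpow_le_rpow (by positivity) hkey hδ0.le
  rw [Real.mul_rpow hp0 (by positivity), Real.mul_rpow hc0 hx0, hcδ] at h2
  have hxδ0 : 0 ≤ x ^ δ := Real.rpow_nonneg hx0 δ
  rcases eq_or_lt_of_le hp0 with h0 | h0
  · rw [← h0, Real.zero_rpow (by positivity : (1:ℝ) + δ ≠ 0)]
    norm_num
  · have hsplit : p ^ (1 + δ) = p * p ^ δ := by
      rw [Real.rpow_add h0, Real.rpow_one]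
    have h3 : p * (p ^ δ * (x + d) ^ δ) ≤ p * ((1 + p ^ δ) / 2 * x ^ δ) :=
      mul_le_mul_of_nonneg_left h2 hp0
    rw [hsplit]
    nlinarith
end

section
/- Let r > 0, h > 0, τ ∈ ℕ, p ∈ [0,1), and S a nonnegative integrable random variable with E[S] defined. For b > 0, define C(b) = r·μ - h·E[(s(b) - S)⁺] - b·E[(S - s(b))⁺], where μ > 0 is a constant and s(b) = inf{y : P[S ≥ y] ≤ h/(h+b)}. Suppose E[e^{γS}] < ∞ for some γ > 0. Then with b₁(r) = r + τh and b₂(r) = (1-p)r/(2(1+τ)), the ratio C(b₁(r)) / C(b₂(r)) → 1 as r → ∞. -/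
open MeasureTheory Filter Real ProbabilityTheory Asymptotics

/-!
Write `M = E[e^{γS}]`. By the Chernoff bound `P[S ≥ y] ≤ e^{-γy} M`, the level
`y(b) = γ⁻¹ log (M (h + b) / h)` has tail probability at most `h / (h + b)`, so the base-stock
level satisfies `0 ≤ s(b) ≤ y(b)`. Splitting the shortfall at `y(b)`,
`b E[(S - s(b))⁺] ≤ b E[(S - y(b))⁺] + b P[S > s(b)] (y(b) - s(b)) ≤ h / γ + h (y(b) - s(b))`,
while `h E[(s(b) - S)⁺] ≤ h s(b)`. Hence the expected cost at `s(b)` is at most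
`h / γ + h y(b) = O(log b)`, which is `o(r)` when `b` grows linearly in `r`, and both profits are
`r μ + o(r)`.
-/

section TailQuantile

variable {Ω : Type*} [MeasurableSpace Ω] {μ : Measure Ω} {S : Ω → ℝ} {c : ℝ}

variable (μ S c) in
noncomputable def tailQuantile : ℝ := sInf {y : ℝ | μ.real {ω | y ≤ S ω} ≤ c}

lemma pos_of_tail_le_of_lt_one [IsProbabilityMeasure μ] (hS : ∀ ω, 0 ≤ S ω) (hc : c < 1)
    {y : ℝ} (hy : μ.real {ω | y ≤ S ω} ≤ c) : 0 < y := by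
  by_contra! hy0
  have huniv : {ω | y ≤ S ω} = Set.univ := Set.eq_univ_of_forall fun ω => hy0.trans (hS ω)
  rw [huniv, probReal_univ] at hy
  linarith

lemma tailQuantile_nonneg [IsProbabilityMeasure μ] (hS : ∀ ω, 0 ≤ S ω) (hc : c < 1) :
    0 ≤ tailQuantile μ S c :=
  Real.sInf_nonneg fun _ hy => (pos_of_tail_le_of_lt_one hS hc hy).le

lemma tailQuantile_le [IsProbabilityMeasure μ] (hS : ∀ ω, 0 ≤ S ω) (hc : c < 1)
    {y : ℝ} (hy : μ.real {ω | y ≤ S ω} ≤ c) : tailQuantile μ S c ≤ y :=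
  csInf_le ⟨0, fun _ hz => (pos_of_tail_le_of_lt_one hS hc hz).le⟩ hy

lemma tail_tailQuantile_add_le [IsFiniteMeasure μ] {y : ℝ} (hy : μ.real {ω | y ≤ S ω} ≤ c)
    {ε : ℝ} (hε : 0 < ε) : μ.real {ω | tailQuantile μ S c + ε ≤ S ω} ≤ c := by
  obtain ⟨z, hz, hzlt⟩ :=
    exists_lt_of_csInf_lt ⟨y, hy⟩ (lt_add_of_pos_right (tailQuantile μ S c) hε)
  exact (measureReal_mono fun ω hω => hzlt.le.trans hω).trans hz

end TailQuantile

section Shortfall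

variable {Ω : Type*} [MeasurableSpace Ω] {μ : Measure Ω} {S : Ω → ℝ}

lemma integral_posPart_sub_le_of_tail_le [IsProbabilityMeasure μ] (hSm : Measurable S)
    (hSi : Integrable S μ) {c t y : ℝ} (hty : t ≤ y)
    (htail : ∀ ε > 0, μ.real {ω | t + ε ≤ S ω} ≤ c) :
    ∫ ω, max (S ω - t) 0 ∂μ ≤ ∫ ω, max (S ω - y) 0 ∂μ + c * (y - t) := by
  refine le_of_forall_pos_le_add fun ε hε => ?_
  set E := {ω | t + ε ≤ S ω}
  have hE : MeasurableSet E := measurableSet_le measurable_const hSm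
  have hpt : ∀ ω, max (S ω - t) 0 ≤ ε + max (S ω - y) 0 + E.indicator (fun _ => y - t) ω := by
    intro ω
    have hmax := le_max_left (S ω - y) 0
    have hmax0 := le_max_right (S ω - y) 0
    by_cases hω : ω ∈ E
    · rw [Set.indicator_of_mem hω]
      exact max_le (by linarith) (by linarith)
    · rw [Set.indicator_of_notMem hω]
      exact max_le (by simp only [E, Set.mem_ofPred_eq] at hω; linarith) (by linarith)
  have hIy : Integrable (fun ω => max (S ω - y) 0) μ := (hSi.sub (integrable_const y)).pos_part
  have hIE : Integrable (E.indicator fun _ => y - t) μ := (integrable_const _).indicator hE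
  calc ∫ ω, max (S ω - t) 0 ∂μ
      ≤ ∫ ω, (ε + max (S ω - y) 0 + E.indicator (fun _ => y - t) ω) ∂μ :=
        integral_mono (hSi.sub (integrable_const t)).pos_part
          (((integrable_const ε).add hIy).add hIE) hpt
    _ = ε + ∫ ω, max (S ω - y) 0 ∂μ + μ.real E * (y - t) := by
        rw [integral_add (f := fun ω => ε + max (S ω - y) 0) ((integrable_const ε).add hIy) hIE,
          integral_add (integrable_const ε) hIy, integral_indicator_const _ hE]
        simp
    _ ≤ ε + ∫ ω, max (S ω - y) 0 ∂μ + c * (y - t) := by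
        have := mul_le_mul_of_nonneg_right (htail ε hε) (sub_nonneg.2 hty)
        linarith
    _ = ∫ ω, max (S ω - y) 0 ∂μ + c * (y - t) + ε := by ring

lemma max_le_exp_mul_div {γ : ℝ} (hγ : 0 < γ) (x : ℝ) : max x 0 ≤ exp (γ * x) / γ := by
  rw [le_div_iff₀ hγ, max_mul_of_nonneg _ _ hγ.le, zero_mul]
  exact max_le (by linarith [add_one_le_exp (γ * x)]) (exp_pos _).le

lemma integral_posPart_sub_le_exp_mul_mgf {γ : ℝ} (hγ : 0 < γ)
    (hexp : Integrable (fun ω => exp (γ * S ω)) μ) (y : ℝ) :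
    ∫ ω, max (S ω - y) 0 ∂μ ≤ exp (-γ * y) * mgf S μ γ / γ := by
  have hpt : ∀ ω, max (S ω - y) 0 ≤ exp (-γ * y) * exp (γ * S ω) / γ := fun ω => by
    rw [← exp_add, show -γ * y + γ * S ω = γ * (S ω - y) by ring]
    exact max_le_exp_mul_div hγ _
  calc ∫ ω, max (S ω - y) 0 ∂μ ≤ ∫ ω, exp (-γ * y) * exp (γ * S ω) / γ ∂μ :=
        integral_mono_of_nonneg (ae_of_all _ fun _ => le_max_right _ _)
          ((hexp.const_mul _).div_const _) (ae_of_all _ hpt)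
    _ = exp (-γ * y) * mgf S μ γ / γ := by rw [integral_div, integral_const_mul, mgf]

end Shortfall

lemma tendsto_log_mul_add_div_atTop {A : ℝ} (hA : 0 < A) (B : ℝ) :
    Tendsto (fun r => log (A * r + B) / r) atTop (nhds 0) := by
  have hlin : Tendsto (fun r => A * r + B) atTop atTop :=
    tendsto_atTop_add_const_right _ B (tendsto_id.const_mul_atTop hA)
  have hO : (fun r => A * r + B) =O[atTop] id :=
    ((isBigO_refl id atTop).const_mul_left A).add (isLittleO_const_id_atTop B).isBigO
  exact ((isLittleO_log_id_atTop.comp_tendsto hlin).trans_isBigO hO).tendsto_div_nhds_zero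

section BaseStockCost

variable {Ω : Type*} [MeasurableSpace Ω] {μ : Measure Ω} {S : Ω → ℝ}

variable (μ S) in
noncomputable def baseStockCost (h b t : ℝ) : ℝ :=
  h * ∫ ω, max (t - S ω) 0 ∂μ + b * ∫ ω, max (S ω - t) 0 ∂μ

lemma baseStockCost_nonneg {h b : ℝ} (hh : 0 ≤ h) (hb : 0 ≤ b) (t : ℝ) :
    0 ≤ baseStockCost μ S h b t :=
  add_nonneg (mul_nonneg hh (integral_nonneg fun _ => le_max_right _ _))
    (mul_nonneg hb (integral_nonneg fun _ => le_max_right _ _))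

variable [IsProbabilityMeasure μ] (hSm : Measurable S) (hSnn : ∀ ω, 0 ≤ S ω)
  (hSi : Integrable S μ) {γ : ℝ} (hγ : 0 < γ) (hexp : Integrable (fun ω => exp (γ * S ω)) μ)
  {h : ℝ} (hh : 0 < h)
include hSm hSnn hSi hγ hexp hh

theorem baseStockCost_tailQuantile_le {b : ℝ} (hb : 0 < b) :
    baseStockCost μ S h b (tailQuantile μ S (h / (h + b)))
      ≤ h / γ + h * (log (mgf S μ γ * (h + b) / h) / γ) := by
  set M := mgf S μ γ
  set c := h / (h + b)
  set y := log (M * (h + b) / h) / γ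
  set t := tailQuantile μ S c
  have hc1 : c < 1 := (div_lt_one (by positivity)).2 (by linarith)
  have hbc : b * c ≤ h := by
    rw [mul_div_assoc', div_le_iff₀ (by positivity)]
    nlinarith
  have hMc : exp (-γ * y) * M = c := by
    have hM : 0 < M := mgf_pos hexp
    have hγy : γ * y = log (M * (h + b) / h) := mul_div_cancel₀ _ hγ.ne'
    rw [neg_mul, hγy, exp_neg, exp_log (by positivity)]
    simp only [c]
    field_simp
  have hy : μ.real {ω | y ≤ S ω} ≤ c := hMc ▸ measure_ge_le_exp_mul_mgf y hγ.le hexp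
  have ht0 : 0 ≤ t := tailQuantile_nonneg hSnn hc1
  have hty : t ≤ y := tailQuantile_le hSnn hc1 hy
  have hover : ∫ ω, max (t - S ω) 0 ∂μ ≤ t :=
    calc ∫ ω, max (t - S ω) 0 ∂μ ≤ ∫ _, t ∂μ :=
          integral_mono_of_nonneg (ae_of_all _ fun _ => le_max_right _ _) (integrable_const t)
            (ae_of_all _ fun ω => max_le (by linarith [hSnn ω]) ht0)
      _ = t := by simp
  have hunder : ∫ ω, max (S ω - t) 0 ∂μ ≤ c / γ + c * (y - t) :=
    calc ∫ ω, max (S ω - t) 0 ∂μ ≤ ∫ ω, max (S ω - y) 0 ∂μ + c * (y - t) :=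
          integral_posPart_sub_le_of_tail_le hSm hSi hty
            fun _ hε => tail_tailQuantile_add_le hy hε
      _ ≤ exp (-γ * y) * M / γ + c * (y - t) := by
          gcongr
          exact integral_posPart_sub_le_exp_mul_mgf hγ hexp y
      _ = c / γ + c * (y - t) := by rw [hMc]
  calc baseStockCost μ S h b t ≤ h * t + b * (c / γ + c * (y - t)) := by
        unfold baseStockCost
        gcongr
    _ = h * t + b * c / γ + b * c * (y - t) := by ring
    _ ≤ h * t + h / γ + h * (y - t) := by
        have : 0 ≤ y - t := sub_nonneg.2 hty
        gcongr
    _ = h / γ + h * y := by ring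

theorem tendsto_baseStockCost_tailQuantile_div_atTop {a : ℝ} (ha : 0 < a) (c : ℝ) :
    Tendsto (fun r => baseStockCost μ S h (a * r + c)
      (tailQuantile μ S (h / (h + (a * r + c)))) / r) atTop (nhds 0) := by
  set M := mgf S μ γ
  have hM : 0 < M := mgf_pos hexp
  have hlog : Tendsto (fun r => log (M * (h + (a * r + c)) / h) / r) atTop (nhds 0) := by
    refine (tendsto_log_mul_add_div_atTop (A := M * a / h) (by positivity)
      (M * (h + c) / h)).congr fun r => ?_
    congr 2
    field_simp
    ring
  have hbound : Tendsto (fun r => (h / γ + h * (log (M * (h + (a * r + c)) / h) / γ)) / r)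
      atTop (nhds 0) := by
    convert ((tendsto_const_nhds (x := h / γ)).div_atTop tendsto_id).add
      (hlog.const_mul (h / γ)) using 1
    · ext r
      simp only [id]
      ring
    · simp
  have hb : ∀ᶠ r in atTop, 0 < a * r + c :=
    (tendsto_atTop_add_const_right _ c (tendsto_id.const_mul_atTop ha)).eventually_gt_atTop 0
  refine tendsto_of_tendsto_of_tendsto_of_le_of_le' tendsto_const_nhds hbound ?_ ?_
  · filter_upwards [hb, eventually_gt_atTop 0] with r hbr hr
    exact div_nonneg (baseStockCost_nonneg hh.le hbr.le _) hr.le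
  · filter_upwards [hb, eventually_gt_atTop 0] with r hbr hr
    exact div_le_div_of_nonneg_right
      (baseStockCost_tailQuantile_le hSm hSnn hSi hγ hexp hh hbr) hr.le

end BaseStockCost

lemma tendsto_mul_sub_div_mul_sub_atTop {m : ℝ} (hm : m ≠ 0) {f g : ℝ → ℝ}
    (hf : Tendsto (fun r => f r / r) atTop (nhds 0))
    (hg : Tendsto (fun r => g r / r) atTop (nhds 0)) :
    Tendsto (fun r => (r * m - f r) / (r * m - g r)) atTop (nhds 1) := by
  have hlin : ∀ k : ℝ → ℝ, Tendsto (fun r => k r / r) atTop (nhds 0) →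
      Tendsto (fun r => (r * m - k r) / r) atTop (nhds m) := fun k hk => by
    refine (sub_zero m ▸ tendsto_const_nhds.sub hk).congr' ?_
    filter_upwards [eventually_ne_atTop 0] with r hr
    field_simp
  have hratio := (hlin f hf).div (hlin g hg) hm
  rw [div_self hm] at hratio
  refine hratio.congr' ?_
  filter_upwards [eventually_ne_atTop 0] with r hr
  exact div_div_div_cancel_right₀ hr _ _

theorem profit_ratio_tendsto_one_general {Ω : Type*} [MeasurableSpace Ω]
    (μ : Measure Ω) [IsProbabilityMeasure μ]
    (S : Ω → ℝ) (hSmeas : Measurable S) (hSnn : ∀ ω, 0 ≤ S ω)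
    (hSint : Integrable S μ)
    (γ : ℝ) (hγ : 0 < γ)
    (hexp : Integrable (fun ω => Real.exp (γ * S ω)) μ)
    (h : ℝ) (hh : 0 < h) (τ : ℕ) (p : ℝ) (hp1 : p < 1)
    (μd : ℝ) (hμd : 0 < μd)
    (s : ℝ → ℝ)
    (hs : ∀ b : ℝ, s b = sInf {y : ℝ | (μ {ω | y ≤ S ω}).toReal ≤ h / (h + b)})
    (C : ℝ → ℝ → ℝ)
    (hC : ∀ r b : ℝ, C r b =
      r * μd - h * ∫ ω, max (s b - S ω) 0 ∂μ - b * ∫ ω, max (S ω - s b) 0 ∂μ) :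
    Tendsto (fun r : ℝ =>
        C r (r + τ * h) / C r ((1 - p) * r / (2 * (1 + τ)))) atTop (nhds 1) := by
  have hCcost : ∀ r b, C r b = r * μd - baseStockCost μ S h b (tailQuantile μ S (h / (h + b))) :=
    fun r b => by rw [hC, hs, baseStockCost, sub_sub]; rfl
  simp only [hCcost]
  refine tendsto_mul_sub_div_mul_sub_atTop hμd.ne' ?_ ?_
  · simpa only [one_mul] using
      tendsto_baseStockCost_tailQuantile_div_atTop hSmeas hSnn hSint hγ hexp hh one_pos (τ * h)
  · have ha : 0 < (1 - p) / (2 * (1 + τ)) := div_pos (sub_pos.2 hp1) (by positivity)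
    convert tendsto_baseStockCost_tailQuantile_div_atTop hSmeas hSnn hSint hγ hexp hh ha 0
      using 5 with r <;> ring

/-- Asymptotic profit-ratio convergence for the backlogging system under its
optimal base-stock policy: with backorder costs `b₁(r) = r + τh` and
`b₂(r) = (1-p) r / (2(1+τ))`, base-stock levels
`s(b) = inf{y : P[S ≥ y] ≤ h/(h+b)}` and profit
`C(r, b) = r μd - h E[(s(b) - S)⁺] - b E[(S - s(b))⁺]`, the ratio
`C(r, b₁(r)) / C(r, b₂(r)) → 1` as `r → ∞`. -/
theorem profit_ratio_tendsto_one {Ω : Type*} [MeasurableSpace Ω]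
    (μ : Measure Ω) [IsProbabilityMeasure μ]
    (S : Ω → ℝ) (hSmeas : Measurable S) (hSnn : ∀ ω, 0 ≤ S ω)
    (hSint : Integrable S μ)
    (γ : ℝ) (hγ : 0 < γ)
    (hexp : Integrable (fun ω => Real.exp (γ * S ω)) μ)
    (h : ℝ) (hh : 0 < h) (τ : ℕ) (p : ℝ) (hp0 : 0 ≤ p) (hp1 : p < 1)
    (μd : ℝ) (hμd : 0 < μd)
    (s : ℝ → ℝ)
    (hs : ∀ b : ℝ, s b = sInf {y : ℝ | (μ {ω | y ≤ S ω}).toReal ≤ h / (h + b)})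
    (C : ℝ → ℝ → ℝ)
    (hC : ∀ r b : ℝ, C r b =
      r * μd - h * ∫ ω, max (s b - S ω) 0 ∂μ - b * ∫ ω, max (S ω - s b) 0 ∂μ) :
    Tendsto (fun r : ℝ =>
        C r (r + τ * h) / C r ((1 - p) * r / (2 * (1 + τ)))) atTop (nhds 1) :=
  profit_ratio_tendsto_one_general μ S hSmeas hSnn hSint γ hγ hexp h hh τ p hp1 μd hμd s hs C hC
end
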